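/- arXiv:1702.04200 — 3 statements merged into one kernel-verified Lean document; each statement's English description precedes it below -/
import Mathlib

section
/- Let LΓ_p(x) := ∫_{Z_p} φ_p(x+t) dt where φ_p(y) = y(log_p(y)-1)·χ(y) and χ is the characteristic function of {y ∈ C_p : |y|_p ≥ 1}. Then for all x ∈ C_p, LΓ_p(x+1) - LΓ_p(x) = χ(x)·log_p(x); that is, the difference equals log_p(x) when |x|_p ≥ 1 and equals 0 when |x|_p < 1. -/
open Filter Topology Asymptotics

/-!
The Riemann sums of the Volkenborn integral telescope: the sums for `x + 1` and for `x` differ by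
`p⁻ⁿ (φ(x + pⁿ) - φ(x))`, a difference quotient of `φ` at `x` with increment `pⁿ → 0`. Hence
`LΓ_p(x + 1) - LΓ_p(x) = φ'(x)`. The logarithm series gives `log(1 + h) = h + O(h²)`, because
`|1/m|_p ≤ m` keeps the tail of the series small, so `log' = 1` at `1` and, by multiplicativity,
`log'(x) = 1/x`. Finally `φ` equals `y (log y - 1)` on the clopen set `|y| ≥ 1` and `0` off it,
so `φ'(x) = χ(x) log x`.
-/

theorem Padic.norm_natCast_inv_le {p : ℕ} [Fact p.Prime] (m : ℕ) : ‖(m : ℚ_[p])⁻¹‖ ≤ m := by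
  rcases Nat.eq_zero_or_pos m with rfl | hm
  · simp
  rw [norm_inv, Padic.norm_eq_zpow_neg_valuation (Nat.cast_ne_zero.mpr hm.ne'),
    Padic.valuation_natCast, ← zpow_neg, neg_neg, zpow_natCast, ← Nat.cast_pow]
  exact_mod_cast Nat.le_of_dvd hm pow_padicValNat_dvd

theorem norm_sub_le_of_hasSum_log_series {K : Type*} [NormedField K] [IsUltrametricDist K]
    (hK : ∀ m : ℕ, ‖(m : K)⁻¹‖ ≤ m) {u L : K}
    (hu : ‖u‖ ≤ 2⁻¹) (hL : HasSum (fun n : ℕ => (-1) ^ n * u ^ (n + 1) / (n + 1 : K)) L) :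
    ‖L - u‖ ≤ 2 * ‖u‖ ^ 2 := by
  have htail : HasSum (fun k : ℕ => (-1) ^ (k + 1) * u ^ (k + 2) / ((k + 2 : ℕ) : K)) (L - u) := by
    simpa [add_assoc, one_add_one_eq_two] using (hasSum_nat_add_iff' 1).mpr hL
  rw [← htail.tsum_eq]
  refine IsUltrametricDist.norm_tsum_le_of_forall_le_of_nonneg (by positivity) fun k => ?_
  have hpow : (k + 2 : ℝ) ≤ 2 * 2 ^ k := by
    have : k + 1 < 2 ^ (k + 1) := Nat.lt_two_pow_self
    rw [← pow_succ']; exact_mod_cast this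
  calc ‖(-1) ^ (k + 1) * u ^ (k + 2) / ((k + 2 : ℕ) : K)‖
      = ‖u‖ ^ 2 * ‖u‖ ^ k * ‖((k + 2 : ℕ) : K)⁻¹‖ := by
        rw [div_eq_mul_inv, norm_mul, norm_mul, norm_pow, norm_neg, norm_one, one_pow, one_mul,
          norm_pow, pow_add, mul_comm (‖u‖ ^ k)]
    _ ≤ ‖u‖ ^ 2 * (2⁻¹) ^ k * (k + 2) := by
        gcongr
        exact_mod_cast hK (k + 2)
    _ ≤ ‖u‖ ^ 2 * 2 := by
        rw [inv_pow, mul_assoc]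
        gcongr
        rw [inv_mul_le_iff₀ (by positivity)]
        linarith
    _ = 2 * ‖u‖ ^ 2 := mul_comm _ _

section LogDerivative

variable {K : Type*} [NontriviallyNormedField K]

theorem hasDerivAt_one_of_hasSum_log_series [IsUltrametricDist K]
    (hK : ∀ m : ℕ, ‖(m : K)⁻¹‖ ≤ m) {log : K → K}
    (hlog : ∀ y : K, ‖y - 1‖ < 1 →
      HasSum (fun n : ℕ => (-1) ^ n * (y - 1) ^ (n + 1) / (n + 1 : K)) (log y)) :
    HasDerivAt log 1 1 := by
  have hlog_one : log 1 = 0 := by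
    have hzero := hlog 1 (by simp)
    simp only [sub_self, ne_eq, add_eq_zero, one_ne_zero, and_false, not_false_eq_true,
      zero_pow, mul_zero, zero_div] at hzero
    exact hzero.unique hasSum_zero
  have hbigO : (fun h : K => log (1 + h) - h) =O[𝓝 0] fun h => h ^ 2 := by
    refine IsBigO.of_bound 2 ?_
    filter_upwards [Metric.closedBall_mem_nhds (0 : K) (by norm_num : (0 : ℝ) < 2⁻¹)] with h hh
    rw [mem_closedBall_zero_iff] at hh
    have hseries := hlog (1 + h) (by rw [add_sub_cancel_left]; linarith)
    simp only [add_sub_cancel_left] at hseries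
    simpa using norm_sub_le_of_hasSum_log_series hK hh hseries
  rw [hasDerivAt_iff_isLittleO_nhds_zero]
  simpa [hlog_one] using hbigO.trans_isLittleO (isLittleO_pow_id one_lt_two)

theorem hasDerivAt_inv_of_map_mul {log : K → K} (h1 : HasDerivAt log 1 1)
    (hmul : ∀ x y : K, x ≠ 0 → y ≠ 0 → log (x * y) = log x + log y) {x : K} (hx : x ≠ 0) :
    HasDerivAt log x⁻¹ x := by
  have h1' : HasDerivAt log 1 (x⁻¹ * x) := by rwa [inv_mul_cancel₀ hx]
  have hcomp := (h1'.comp x ((hasDerivAt_id x).const_mul x⁻¹)).const_add (log x)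
  simp only [mul_one, one_mul] at hcomp
  refine hcomp.congr_of_eventuallyEq ?_
  filter_upwards [isOpen_ne.mem_nhds hx] with y hy
  rw [Function.comp_apply, ← hmul x _ hx (mul_ne_zero (inv_ne_zero hx) hy), mul_inv_cancel_left₀ hx]

end LogDerivative

section VolkenbornSum

variable {K : Type*} [Field K]

def volkenbornSum (p : ℕ) (f : K → K) (n : ℕ) : K :=
  ((p : K) ^ n)⁻¹ * ∑ j ∈ Finset.range (p ^ n), f j

theorem volkenbornSum_comp_add_one_sub (p : ℕ) (f : K → K) (x : K) (n : ℕ) :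
    volkenbornSum p (fun t => f (x + 1 + t)) n - volkenbornSum p (fun t => f (x + t)) n =
      ((p : K) ^ n)⁻¹ * (f (x + (p : K) ^ n) - f x) := by
  have htelescope := Finset.sum_range_sub (fun j : ℕ => f (x + j)) (p ^ n)
  push_cast at htelescope
  rw [volkenbornSum, volkenbornSum, ← mul_sub, ← Finset.sum_sub_distrib]
  simpa only [add_zero, add_assoc, add_comm (1 : K)] using congrArg (((p : K) ^ n)⁻¹ * ·) htelescope

end VolkenbornSum

theorem tendsto_volkenbornSum_comp_add_one_sub {K : Type*} [NontriviallyNormedField K]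
    {p : ℕ} (hp0 : (p : K) ≠ 0) (hp1 : ‖(p : K)‖ < 1) {f : K → K} {f' x : K}
    (hf : HasDerivAt f f' x) :
    Tendsto (fun n => volkenbornSum p (fun t => f (x + 1 + t)) n -
      volkenbornSum p (fun t => f (x + t)) n) atTop (𝓝 f') := by
  simp only [volkenbornSum_comp_add_one_sub]
  have hpow : Tendsto (fun n : ℕ => (p : K) ^ n) atTop (𝓝[≠] 0) :=
    tendsto_nhdsWithin_iff.mpr ⟨tendsto_pow_atTop_nhds_zero_of_norm_lt_one hp1,
      Eventually.of_forall fun n => pow_ne_zero n hp0⟩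
  exact hf.tendsto_slope_zero.comp hpow

section KashioPhi

variable {K : Type*} [NontriviallyNormedField K]

noncomputable def kashioPhi (log : K → K) (y : K) : K :=
  if 1 ≤ ‖y‖ then y * (log y - 1) else 0

theorem hasDerivAt_kashioPhi [IsUltrametricDist K] {log : K → K} (hlog : ∀ y : K, y ≠ 0 → HasDerivAt log y⁻¹ y)
    (x : K) : HasDerivAt (kashioPhi log) (if 1 ≤ ‖x‖ then log x else 0) x := by
  by_cases hx : 1 ≤ ‖x‖
  · have hx0 : x ≠ 0 := norm_pos_iff.mp (zero_lt_one.trans_le hx)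
    have hderiv := (hasDerivAt_id x).mul ((hlog x hx0).sub_const 1)
    rw [id, mul_inv_cancel₀ hx0, one_mul, sub_add_cancel] at hderiv
    rw [if_pos hx]
    refine hderiv.congr_of_eventuallyEq ?_
    have hopen : IsOpen {y : K | 1 ≤ ‖y‖} := by
      simpa [Set.compl_def] using (IsUltrametricDist.isClosed_ball (0 : K) 1).isOpen_compl
    filter_upwards [hopen.mem_nhds hx] with y hy
    exact if_pos hy
  · rw [if_neg hx]
    refine (hasDerivAt_const x (0 : K)).congr_of_eventuallyEq ?_
    have hopen := Metric.isOpen_ball (x := (0 : K)) (ε := 1)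
    filter_upwards [hopen.mem_nhds (mem_ball_zero_iff.mpr (not_le.mp hx))] with y hy
    exact if_neg (not_le.mpr (mem_ball_zero_iff.mp hy))

end KashioPhi

theorem kashio_log_gamma_difference_general (p : ℕ) [Fact p.Prime] (K : Type*)
    [NontriviallyNormedField K] [IsUltrametricDist K]
    [Algebra ℚ_[p] K] (hiso : ∀ q : ℚ_[p], ‖algebraMap ℚ_[p] K q‖ = ‖q‖)
    (logp : K → K)
    (hlog_mul : ∀ x y : K, x ≠ 0 → y ≠ 0 → logp (x * y) = logp x + logp y)
    (hlog_series : ∀ x : K, ‖x - 1‖ < 1 →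
      HasSum (fun n : ℕ => (-1) ^ n * (x - 1) ^ (n + 1) / (n + 1 : K)) (logp x))
    (LG : K → K)
    (hLG : ∀ x : K,
      Tendsto (fun n : ℕ => ((p : K) ^ n)⁻¹ * ∑ j ∈ Finset.range (p ^ n),
          (if 1 ≤ ‖x + (j : K)‖ then (x + (j : K)) * (logp (x + (j : K)) - 1) else 0))
        atTop (nhds (LG x)))
    (x : K) :
    LG (x + 1) - LG x = if 1 ≤ ‖x‖ then logp x else 0 := by
  have hnorm_natCast : ∀ m : ℕ, ‖(m : K)‖ = ‖(m : ℚ_[p])‖ := fun m => by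
    rw [← map_natCast (algebraMap ℚ_[p] K), hiso]
  have hp1 : ‖(p : K)‖ < 1 := by
    rw [hnorm_natCast, Padic.norm_p]
    exact inv_lt_one_of_one_lt₀ (mod_cast (Fact.out : p.Prime).one_lt)
  have hp0 : (p : K) ≠ 0 := by
    rw [← norm_ne_zero_iff, hnorm_natCast, Padic.norm_p]
    exact inv_ne_zero (mod_cast (Fact.out : p.Prime).ne_zero)
  have hK : ∀ m : ℕ, ‖(m : K)⁻¹‖ ≤ m := fun m => by
    rw [norm_inv, hnorm_natCast, ← norm_inv]
    exact Padic.norm_natCast_inv_le m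
  have hlog : ∀ y : K, y ≠ 0 → HasDerivAt logp y⁻¹ y := fun y hy =>
    hasDerivAt_inv_of_map_mul (hasDerivAt_one_of_hasSum_log_series hK hlog_series) hlog_mul hy
  have hsums : ∀ y : K,
      Tendsto (fun n => volkenbornSum p (fun t => kashioPhi logp (y + t)) n) atTop (𝓝 (LG y)) :=
    hLG
  exact tendsto_nhds_unique ((hsums (x + 1)).sub (hsums x))
    (tendsto_volkenbornSum_comp_add_one_sub hp0 hp1 (hasDerivAt_kashioPhi hlog x))

/-- Difference equation for Kashio's `p`-adic log-gamma function
`LΓ_p(x) = ∫_{ℤ_p} φ_p(x+t) dt`: for all `x ∈ ℂ_p`,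
`LΓ_p(x+1) - LΓ_p(x) = χ(x) log_p(x)`. -/
theorem kashio_log_gamma_difference (p : ℕ) [Fact p.Prime] (K : Type*)
    [NontriviallyNormedField K] [CompleteSpace K] [IsAlgClosed K] [IsUltrametricDist K]
    [Algebra ℚ_[p] K] (hiso : ∀ q : ℚ_[p], ‖algebraMap ℚ_[p] K q‖ = ‖q‖)
    (logp : K → K)
    (hlog_an : ∀ x : K, x ≠ 0 → AnalyticAt K logp x)
    (hlog_mul : ∀ x y : K, x ≠ 0 → y ≠ 0 → logp (x * y) = logp x + logp y)
    (hlog_p : logp (p : K) = 0)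
    (hlog_series : ∀ x : K, ‖x - 1‖ < 1 →
      HasSum (fun n : ℕ => (-1) ^ n * (x - 1) ^ (n + 1) / (n + 1 : K)) (logp x))
    (LG : K → K)
    (hLG : ∀ x : K,
      Tendsto (fun n : ℕ => ((p : K) ^ n)⁻¹ * ∑ j ∈ Finset.range (p ^ n),
          (if 1 ≤ ‖x + (j : K)‖ then (x + (j : K)) * (logp (x + (j : K)) - 1) else 0))
        atTop (nhds (LG x)))
    (x : K) :
    LG (x + 1) - LG x = if 1 ≤ ‖x‖ then logp x else 0 :=
  kashio_log_gamma_difference_general p K hiso logp hlog_mul hlog_series LG hLG x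
end

section
/- Let x ∈ C_p with |x|_p ≤ 1, and suppose there is an integer α with 0 ≤ α ≤ p-1 and |x - α|_p < 1. Then the Volkenborn integral ρ_p(x) := ∫_{Z_p} (x+t)·χ(x+t) dt equals x - x/p + α/p - ⌈α/p⌉, where χ is the characteristic function of {y : |y|_p ≥ 1} and ⌈·⌉ is the integer ceiling. -/
/-!
Let `r < p` be the residue of `-α` modulo `p`. Since `‖x - α‖ < 1`, the ultrametric inequality
gives `‖x + j‖ < 1` exactly when `p ∣ α + j`, i.e. when `j ≡ r (mod p)`. Hence the `p ^ (n + 1)`-th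
Riemann sum is the full sum of `x + j` minus its sum over the progression `p k + r`; both are Gauss
sums, and the result is `x - x / p - r / p + p ^ n (p - 1) / 2`. The last term tends to `0`
because `‖p‖ < 1`, and `r = p ⌈α / p⌉ - α`.
-/

open Filter Finset

theorem two_mul_sum_range_add_mul_natCast {R : Type*} [CommRing R] (a b : R) (N : ℕ) :
    2 * ∑ k ∈ range N, (a + b * k) = N * (2 * a + b * (N - 1)) := by
  induction N with
  | zero => simp
  | succ N ih => rw [sum_range_succ, mul_add, ih]; push_cast; ring

theorem sum_range_mul_filter_natCast_eq {M : Type*} [AddCommMonoid M] {p : ℕ} [NeZero p]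
    (f : ℕ → M) (c : ZMod p) (m : ℕ) :
    ∑ j ∈ (range (p * m)).filter (fun j : ℕ => (j : ZMod p) = c), f j
      = ∑ k ∈ range m, f (p * k + c.val) := by
  have hp : 0 < p := NeZero.pos p
  symm
  refine sum_nbij' (fun k => p * k + c.val) (fun j => j / p) ?_ ?_ ?_ ?_ (fun _ _ => rfl)
  · intro k hk
    simp only [mem_filter, mem_range] at hk ⊢
    refine ⟨?_, by simp⟩
    have := c.val_lt
    nlinarith
  · intro j hj
    simp only [mem_filter, mem_range] at hj ⊢
    exact Nat.div_lt_of_lt_mul hj.1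
  · intro k _
    simp [Nat.mul_add_div hp, Nat.div_eq_of_lt c.val_lt]
  · intro j hj
    simp only [mem_filter, mem_range] at hj
    rw [← hj.2, ZMod.val_natCast]
    exact Nat.div_add_mod j p

theorem sum_range_mul_ite_natCast_ne {M : Type*} [AddCommGroup M] {p : ℕ} [NeZero p]
    (f : ℕ → M) (c : ZMod p) (m : ℕ) :
    ∑ j ∈ range (p * m), (if (j : ZMod p) ≠ c then f j else 0)
      = ∑ j ∈ range (p * m), f j - ∑ k ∈ range m, f (p * k + c.val) := by
  rw [← sum_filter, ← sum_range_mul_filter_natCast_eq, eq_sub_iff_add_eq]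
  exact sum_filter_not_add_sum_filter _ _ _

theorem inv_pow_mul_sum_range_ite_natCast_ne {K : Type*} [Field K] [CharZero K] {p : ℕ}
    [NeZero p] (x : K) (c : ZMod p) (n : ℕ) :
    ((p : K) ^ (n + 1))⁻¹ * ∑ j ∈ range (p ^ (n + 1)), (if (j : ZMod p) ≠ c then x + j else 0)
      = x - x / p - c.val / p + p ^ n * (p - 1) / 2 := by
  have hall : 2 * ∑ j ∈ range (p ^ (n + 1)), (x + j)
      = p ^ (n + 1) * (2 * x + (p ^ (n + 1) - 1)) := by
    simpa using two_mul_sum_range_add_mul_natCast x 1 (p ^ (n + 1))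
  have hres : 2 * ∑ k ∈ range (p ^ n), (x + ((p * k + c.val : ℕ) : K))
      = p ^ n * (2 * (x + c.val) + p * (p ^ n - 1)) := by
    rw [← Nat.cast_pow, ← two_mul_sum_range_add_mul_natCast (x + c.val) (p : K)]
    congr 1
    exact sum_congr rfl fun k _ => by push_cast; ring
  have hp : (p : K) ≠ 0 := Nat.cast_ne_zero.mpr (NeZero.ne p)
  rw [pow_succ' p, sum_range_mul_ite_natCast_ne (fun j => x + j), ← pow_succ']
  field_simp
  linear_combination (p : K) * (hall - hres)

theorem natCast_mul_ceil_div_eq_add_val_neg {p : ℕ} [NeZero p] (α : ℤ) :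
    (p : ℤ) * ⌈(α : ℚ) / p⌉ = α + (-(α : ZMod p)).val := by
  rw [← Int.cast_neg, Rat.ceil_intCast_div_natCast, ZMod.val_intCast, Int.emod_def]
  ring

theorem IsUltrametricDist.norm_lt_one_iff_of_norm_sub_lt_one {E : Type*}
    [SeminormedAddCommGroup E] [IsUltrametricDist E] {x y : E} (h : ‖x - y‖ < 1) :
    ‖x‖ < 1 ↔ ‖y‖ < 1 := by
  have hball : Metric.ball y 1 = Metric.ball x 1 :=
    IsUltrametricDist.ball_eq_of_mem (mem_ball_iff_norm.mpr h)
  rw [← dist_zero_right x, ← dist_zero_right y, ← Metric.mem_ball', ← Metric.mem_ball', hball]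

section Padic

variable {p : ℕ} [Fact p.Prime] {K : Type*} [NormedField K] [Algebra ℚ_[p] K]

theorem norm_intCast_lt_one_iff_of_norm_algebraMap
    (hiso : ∀ q : ℚ_[p], ‖algebraMap ℚ_[p] K q‖ = ‖q‖) (m : ℤ) :
    ‖(m : K)‖ < 1 ↔ (m : ZMod p) = 0 := by
  rw [← map_intCast (algebraMap ℚ_[p] K), hiso, Padic.norm_intCast_lt_one_iff,
    ZMod.intCast_zmod_eq_zero_iff_dvd]

theorem one_le_norm_add_natCast_iff [IsUltrametricDist K]
    (hiso : ∀ q : ℚ_[p], ‖algebraMap ℚ_[p] K q‖ = ‖q‖) {x : K} {α : ℤ} (hclose : ‖x - α‖ < 1)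
    (j : ℕ) : 1 ≤ ‖x + j‖ ↔ (j : ZMod p) ≠ -α := by
  have hshift : ‖(x + j) - ((α + j : ℤ) : K)‖ < 1 := by push_cast; rwa [add_sub_add_right_eq_sub]
  rw [← not_lt, IsUltrametricDist.norm_lt_one_iff_of_norm_sub_lt_one hshift,
    norm_intCast_lt_one_iff_of_norm_algebraMap hiso, Int.cast_add, Int.cast_natCast,
    add_eq_zero_iff_eq_neg']

end Padic

theorem rho_p_of_residue_in_Fp_general (p : ℕ) [Fact p.Prime] (K : Type*)
    [NontriviallyNormedField K] [IsUltrametricDist K]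
    [Algebra ℚ_[p] K] (hiso : ∀ q : ℚ_[p], ‖algebraMap ℚ_[p] K q‖ = ‖q‖)
    (x : K) (α : ℤ)
    (hclose : ‖x - (α : K)‖ < 1) :
    Tendsto (fun n : ℕ => ((p : K) ^ n)⁻¹ * ∑ j ∈ Finset.range (p ^ n),
        (if 1 ≤ ‖x + (j : K)‖ then x + (j : K) else 0))
      atTop (nhds (x - x / (p : K) + (α : K) / (p : K) - ((⌈(α : ℚ) / (p : ℚ)⌉ : ℤ) : K))) := by
  have : CharZero K := charZero_of_injective_algebraMap (algebraMap ℚ_[p] K).injective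
  have hp : (p : K) ≠ 0 := Nat.cast_ne_zero.mpr (NeZero.ne p)
  have hp_norm : ‖(p : K)‖ < 1 := by
    simpa using (norm_intCast_lt_one_iff_of_norm_algebraMap hiso (p : ℤ)).mpr (by simp)
  have hceil := congrArg (Int.cast : ℤ → K) (natCast_mul_ceil_div_eq_add_val_neg (p := p) α)
  simp only [Int.cast_mul, Int.cast_add, Int.cast_natCast] at hceil
  have hlimit : x - x / p + α / p - ⌈(α : ℚ) / p⌉ = x - x / p - (-(α : ZMod p)).val / p := by
    field_simp
    linear_combination -hceil
  rw [← tendsto_add_atTop_iff_nat 1, hlimit]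
  simp only [one_le_norm_add_natCast_iff hiso hclose, inv_pow_mul_sum_range_ite_natCast_ne,
    mul_div_assoc]
  simpa using tendsto_const_nhds.add
    ((tendsto_pow_atTop_nhds_zero_of_norm_lt_one hp_norm).mul_const (((p : K) - 1) / 2))

/-- For `‖x‖ ≤ 1` with `‖x - α‖ < 1` for an integer `0 ≤ α ≤ p-1`, the Volkenborn
integral `ρ_p(x) = ∫_{ℤ_p} (x+t) χ(x+t) dt` equals `x - x/p + α/p - ⌈α/p⌉`. -/
theorem rho_p_of_residue_in_Fp (p : ℕ) [Fact p.Prime] (K : Type*)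
    [NontriviallyNormedField K] [CompleteSpace K] [IsAlgClosed K] [IsUltrametricDist K]
    [Algebra ℚ_[p] K] (hiso : ∀ q : ℚ_[p], ‖algebraMap ℚ_[p] K q‖ = ‖q‖)
    (x : K) (hx : ‖x‖ ≤ 1) (α : ℤ) (hα0 : 0 ≤ α) (hα1 : α ≤ (p : ℤ) - 1)
    (hclose : ‖x - (α : K)‖ < 1) :
    Tendsto (fun n : ℕ => ((p : K) ^ n)⁻¹ * ∑ j ∈ Finset.range (p ^ n),
        (if 1 ≤ ‖x + (j : K)‖ then x + (j : K) else 0))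
      atTop (nhds (x - x / (p : K) + (α : K) / (p : K) - ((⌈(α : ℚ) / (p : ℚ)⌉ : ℤ) : K))) :=
  rho_p_of_residue_in_Fp_general p K hiso x α hclose
end

section
/- Let p ∤ m be a positive integer and let y ∈ C_p. Then ∑_{i=0}^{m-1} LΓ_p((y+i)/m) = LΓ_p(y) - log_p(m)·ρ_p(y), where LΓ_p(x) = ∫_{Z_p} (x+t)(log_p(x+t)-1)χ(x+t) dt and ρ_p(y) = ∫_{Z_p} (y+t)χ(y+t) dt. -/
open Filter Finset Topology

/-!
Write `F(z) = χ(z) z (log_p z - 1)` and `ρ(z) = χ(z) z`. Since `|m| = 1`, the point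
`(y + i)/m + j` has the same norm as `y + i + m j`, and `log_p` turns division by `m` into
subtraction of `log_p m`; so the `i`-th Riemann sum on the left at level `n`, summed over `i`, is
`m⁻¹ p⁻ⁿ ∑_{k < m pⁿ} (F - log_p m · ρ)(y + k)`. It remains to see that Riemann sums over `m pⁿ`
points converge to `m` times the Volkenborn integral. Cut `[0, m pⁿ)` into `m` blocks of length
`pⁿ`; the `c`-th block is the first one shifted by `ε = c pⁿ`, `|ε| ≤ p⁻ⁿ`. From the series of
`log_p (1 + u)`, `F(z + ε) = F(z) + ε χ(z) log_p z + O(p |ε|²)` for `|ε| ≤ 1/p`, and the averages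
`p⁻ⁿ ∑_{j < pⁿ} χ log_p (y + j)` stay bounded because `S_{n+1} - p S_n = O(p⁻ⁿ)` for their sums
`S_n`. Hence the averages over two blocks differ by `O(p⁻ⁿ)`.
-/

theorem sum_range_mul_eq_sum_sum {M : Type*} [AddCommMonoid M] (g : ℕ → M) (a b : ℕ) :
    ∑ k ∈ range (a * b), g k = ∑ i ∈ range a, ∑ j ∈ range b, g (b * i + j) := by
  induction a with
  | zero => simp
  | succ a ih =>
    rw [Nat.succ_mul, sum_range_add, ih, sum_range_succ]
    simp only [Nat.mul_comm a b]

theorem sum_range_mul_eq_sum_sum_add_mul {M : Type*} [AddCommMonoid M] (g : ℕ → M) (a b : ℕ) :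
    ∑ k ∈ range (a * b), g k = ∑ i ∈ range a, ∑ j ∈ range b, g (i + a * j) := by
  rw [mul_comm, sum_range_mul_eq_sum_sum, sum_comm]
  simp only [add_comm]

section NatCastNorm

variable {p : ℕ} [Fact p.Prime] {K : Type*} [NormedField K]

theorem norm_natCast_le_one_of_padic (hnorm : ∀ n : ℕ, ‖(n : K)‖ = ‖(n : ℚ_[p])‖) (n : ℕ) :
    ‖(n : K)‖ ≤ 1 := by
  rw [hnorm]
  exact_mod_cast Padic.norm_int_le_one (n : ℤ)

theorem norm_natCast_eq_one_of_padic (hnorm : ∀ n : ℕ, ‖(n : K)‖ = ‖(n : ℚ_[p])‖) {m : ℕ}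
    (hm : ¬ p ∣ m) : ‖(m : K)‖ = 1 := by
  rw [hnorm, Padic.norm_natCast_eq_one_iff]
  exact (Nat.Prime.coprime_iff_not_dvd Fact.out).2 hm

theorem norm_prime_pow_of_padic (hnorm : ∀ n : ℕ, ‖(n : K)‖ = ‖(n : ℚ_[p])‖) (n : ℕ) :
    ‖(p : K) ^ n‖ = ((p : ℝ) ^ n)⁻¹ := by
  rw [norm_pow, hnorm, Padic.norm_p, inv_pow]

theorem norm_natCast_inv_le_of_padic (hnorm : ∀ n : ℕ, ‖(n : K)‖ = ‖(n : ℚ_[p])‖) (n : ℕ) :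
    ‖(n : K)⁻¹‖ ≤ n := by
  rcases Nat.eq_zero_or_pos n with rfl | hn
  · simp
  rw [norm_inv, hnorm, Padic.norm_eq_zpow_neg_valuation (by exact_mod_cast hn.ne'),
    Padic.valuation_natCast, ← zpow_neg, neg_neg, zpow_natCast]
  exact_mod_cast Nat.le_of_dvd hn pow_padicValNat_dvd

theorem norm_prime_pow_mul_natCast_le_of_padic (hnorm : ∀ n : ℕ, ‖(n : K)‖ = ‖(n : ℚ_[p])‖)
    (n a : ℕ) : ‖(p : K) ^ n * a‖ ≤ ((p : ℝ) ^ n)⁻¹ := by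
  rw [norm_mul, norm_prime_pow_of_padic hnorm]
  exact mul_le_of_le_one_right (by positivity) (norm_natCast_le_one_of_padic hnorm a)

end NatCastNorm

theorem Nat.Prime.inv_cast_lt_one {p : ℕ} (hp : p.Prime) : (p : ℝ)⁻¹ < 1 :=
  inv_lt_one_of_one_lt₀ (by exact_mod_cast hp.one_lt)

theorem inv_prime_pow_le_inv_prime {p : ℕ} (hp : p.Prime) {n : ℕ} (hn : 1 ≤ n) :
    ((p : ℝ) ^ n)⁻¹ ≤ (p : ℝ)⁻¹ := by
  have hp1 : (1 : ℝ) ≤ p := by exact_mod_cast hp.one_lt.le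
  exact inv_anti₀ (by positivity) (le_self_pow₀ hp1 (by omega))

theorem one_le_norm_add_iff {K : Type*} [NormedAddCommGroup K] [IsUltrametricDist K] {z ε : K}
    (hε : ‖ε‖ < 1) : 1 ≤ ‖z + ε‖ ↔ 1 ≤ ‖z‖ := by
  constructor
  · intro h
    by_contra! hz
    exact h.not_gt ((IsUltrametricDist.norm_add_le_max z ε).trans_lt (max_lt hz hε))
  · intro hz
    rw [IsUltrametricDist.norm_add_eq_max_of_norm_ne_norm (hε.trans_le hz).ne']
    exact hz.trans (le_max_left _ _)

section Logarithm

variable {p : ℕ} [Fact p.Prime] {K : Type*} [NormedField K] [IsUltrametricDist K] {logp : K → K}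

theorem norm_log_one_add_sub_self_le (hnorm : ∀ n : ℕ, ‖(n : K)‖ = ‖(n : ℚ_[p])‖)
    (hlog_series : ∀ x : K, ‖x - 1‖ < 1 →
      HasSum (fun n : ℕ => (-1) ^ n * (x - 1) ^ (n + 1) / (n + 1 : K)) (logp x))
    {u : K} (hu : ‖u‖ ≤ (p : ℝ)⁻¹) : ‖logp (1 + u) - u‖ ≤ p * ‖u‖ ^ 2 := by
  have hp : (0 : ℝ) < p := by exact_mod_cast (Fact.out : p.Prime).pos
  have hup : ‖u‖ * p ≤ 1 := by rwa [← le_inv_mul_iff₀' hp, mul_one]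
  have hs := hlog_series (1 + u) (by simpa using hu.trans_lt (Fact.out : p.Prime).inv_cast_lt_one)
  simp only [add_sub_cancel_left] at hs
  have htail := (hasSum_nat_add_iff' 1).mpr hs
  simp only [range_one, sum_singleton, pow_zero, one_mul, pow_one, Nat.cast_zero, zero_add,
    div_one] at htail
  rw [← htail.tsum_eq]
  refine IsUltrametricDist.norm_tsum_le_of_forall_le_of_nonneg (by positivity) fun k => ?_
  -- the `k`-th term is at most `‖u‖² (‖u‖ p)ᵏ`, because `k + 2 ≤ p ^ (k + 1)`
  have hk : ((k + 1 + 1 : ℕ) : ℝ) ≤ (p : ℝ) ^ (k + 1) := by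
    exact_mod_cast Nat.lt_pow_self (Fact.out : p.Prime).one_lt
  have hterm : ‖(-1) ^ (k + 1) * u ^ (k + 1 + 1) / ((k + 1 : ℕ) + 1 : K)‖
      = ‖u‖ ^ (k + 2) * ‖((k + 1 + 1 : ℕ) : K)⁻¹‖ := by
    rw [div_eq_mul_inv, norm_mul, norm_mul, norm_pow, norm_neg, norm_one, one_pow, one_mul,
      norm_pow]
    push_cast
    ring_nf
  rw [hterm]
  calc ‖u‖ ^ (k + 2) * ‖((k + 1 + 1 : ℕ) : K)⁻¹‖ ≤ ‖u‖ ^ (k + 2) * (p : ℝ) ^ (k + 1) := by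
        gcongr
        exact (norm_natCast_inv_le_of_padic hnorm _).trans hk
    _ = p * ‖u‖ ^ 2 * (‖u‖ * p) ^ k := by ring
    _ ≤ p * ‖u‖ ^ 2 := mul_le_of_le_one_right (by positivity) (pow_le_one₀ (by positivity) hup)

theorem norm_log_one_add_le
    (hlog : ∀ u : K, ‖u‖ ≤ (p : ℝ)⁻¹ → ‖logp (1 + u) - u‖ ≤ p * ‖u‖ ^ 2)
    {u : K} (hu : ‖u‖ ≤ (p : ℝ)⁻¹) : ‖logp (1 + u)‖ ≤ ‖u‖ := by
  have hp : (0 : ℝ) < p := by exact_mod_cast (Fact.out : p.Prime).pos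
  have hup : p * ‖u‖ ≤ 1 := by rwa [← le_inv_mul_iff₀ hp, mul_one]
  calc ‖logp (1 + u)‖ = ‖(logp (1 + u) - u) + u‖ := by rw [sub_add_cancel]
    _ ≤ max (p * ‖u‖ ^ 2) ‖u‖ :=
        (IsUltrametricDist.norm_add_le_max _ _).trans (max_le_max_right _ (hlog u hu))
    _ = ‖u‖ := max_eq_right (by nlinarith [norm_nonneg u])

theorem log_add_eq_log_add_log_one_add_div
    (hlog_mul : ∀ x y : K, x ≠ 0 → y ≠ 0 → logp (x * y) = logp x + logp y)
    {z ε : K} (hz : 1 ≤ ‖z‖) (hε : ‖ε‖ < 1) : logp (z + ε) = logp z + logp (1 + ε / z) := by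
  have hz0 : z ≠ 0 := norm_pos_iff.mp (one_pos.trans_le hz)
  have hzε : z + ε ≠ 0 := norm_pos_iff.mp (one_pos.trans_le ((one_le_norm_add_iff hε).2 hz))
  have hsplit : z + ε = z * (1 + ε / z) := by field_simp
  rw [hsplit, hlog_mul _ _ hz0 (right_ne_zero_of_mul (hsplit ▸ hzε))]

theorem norm_log_add_sub_log_le
    (hlog : ∀ u : K, ‖u‖ ≤ (p : ℝ)⁻¹ → ‖logp (1 + u) - u‖ ≤ p * ‖u‖ ^ 2)
    (hlog_mul : ∀ x y : K, x ≠ 0 → y ≠ 0 → logp (x * y) = logp x + logp y)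
    {z ε : K} (hz : 1 ≤ ‖z‖) (hε : ‖ε‖ ≤ (p : ℝ)⁻¹) : ‖logp (z + ε) - logp z‖ ≤ ‖ε‖ := by
  have hdiv : ‖ε / z‖ ≤ ‖ε‖ := by rw [norm_div]; exact div_le_self (norm_nonneg ε) hz
  rw [log_add_eq_log_add_log_one_add_div hlog_mul hz
    (hε.trans_lt (Fact.out : p.Prime).inv_cast_lt_one), add_sub_cancel_left]
  exact (norm_log_one_add_le hlog (hdiv.trans hε)).trans hdiv

theorem norm_mul_log_sub_expansion_le
    (hlog : ∀ u : K, ‖u‖ ≤ (p : ℝ)⁻¹ → ‖logp (1 + u) - u‖ ≤ p * ‖u‖ ^ 2)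
    (hlog_mul : ∀ x y : K, x ≠ 0 → y ≠ 0 → logp (x * y) = logp x + logp y)
    {z ε : K} (hz : 1 ≤ ‖z‖) (hε : ‖ε‖ ≤ (p : ℝ)⁻¹) :
    ‖(z + ε) * (logp (z + ε) - 1) - z * (logp z - 1) - ε * logp z‖ ≤ p * ‖ε‖ ^ 2 := by
  have hp : (1 : ℝ) ≤ p := by exact_mod_cast (Fact.out : p.Prime).one_lt.le
  have hz0 : z ≠ 0 := norm_pos_iff.mp (one_pos.trans_le hz)
  have hdiv : ‖ε / z‖ ≤ ‖ε‖ := by rw [norm_div]; exact div_le_self (norm_nonneg ε) hz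
  have hexpand : (z + ε) * (logp (z + ε) - 1) - z * (logp z - 1) - ε * logp z
      = z * (logp (1 + ε / z) - ε / z) + ε * logp (1 + ε / z) := by
    rw [log_add_eq_log_add_log_one_add_div hlog_mul hz
      (hε.trans_lt (Fact.out : p.Prime).inv_cast_lt_one)]
    linear_combination mul_div_cancel₀ ε hz0
  rw [hexpand]
  refine (IsUltrametricDist.norm_add_le_max _ _).trans (max_le ?_ ?_)
  · calc ‖z * (logp (1 + ε / z) - ε / z)‖ ≤ ‖z‖ * (p * ‖ε / z‖ ^ 2) := by
          rw [norm_mul]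
          gcongr
          exact hlog _ (hdiv.trans hε)
      _ = p * ‖ε‖ ^ 2 / ‖z‖ := by rw [norm_div]; field_simp
      _ ≤ p * ‖ε‖ ^ 2 := div_le_self (by positivity) hz
  · calc ‖ε * logp (1 + ε / z)‖ ≤ ‖ε‖ * ‖ε‖ := by
          rw [norm_mul]
          gcongr
          exact (norm_log_one_add_le hlog (hdiv.trans hε)).trans hdiv
      _ ≤ p * ‖ε‖ ^ 2 := by nlinarith [norm_nonneg ε]

end Logarithm

section Cutoff

/-- The support of the cutoff `χ`. -/
def chiSupport (K : Type*) [Norm K] : Set K := {z | 1 ≤ ‖z‖}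

theorem indicator_chiSupport_apply {K M : Type*} [Norm K] [Zero M] (f : K → M) (z : K) :
    (chiSupport K).indicator f z = if 1 ≤ ‖z‖ then f z else 0 := by
  simp [Set.indicator_apply, chiSupport]

variable {K : Type*} [NormedField K] [IsUltrametricDist K] {r : ℝ}

theorem add_mem_chiSupport_iff {z ε : K} (hε : ‖ε‖ < 1) :
    z + ε ∈ chiSupport K ↔ z ∈ chiSupport K :=
  one_le_norm_add_iff hε

theorem norm_indicator_add_sub_le {f : K → K} {M : ℝ} (hM : 0 ≤ M) (hr : r < 1)
    (hf : ∀ z ε : K, 1 ≤ ‖z‖ → ‖ε‖ ≤ r → ‖f (z + ε) - f z‖ ≤ M * ‖ε‖)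
    {z ε : K} (hε : ‖ε‖ ≤ r) :
    ‖(chiSupport K).indicator f (z + ε) - (chiSupport K).indicator f z‖ ≤ M * ‖ε‖ := by
  by_cases hz : z ∈ chiSupport K
  · rw [Set.indicator_of_mem hz,
      Set.indicator_of_mem ((add_mem_chiSupport_iff (hε.trans_lt hr)).2 hz)]
    exact hf z ε hz hε
  · rw [Set.indicator_of_notMem hz,
      Set.indicator_of_notMem (mt (add_mem_chiSupport_iff (hε.trans_lt hr)).1 hz), sub_zero,
      norm_zero]
    positivity

theorem norm_indicator_expansion_le {h g : K → K} {C : ℝ} (hC : 0 ≤ C) (hr : r < 1)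
    (hhg : ∀ z ε : K, 1 ≤ ‖z‖ → ‖ε‖ ≤ r → ‖h (z + ε) - h z - ε * g z‖ ≤ C * ‖ε‖ ^ 2)
    {z ε : K} (hε : ‖ε‖ ≤ r) :
    ‖(chiSupport K).indicator h (z + ε) - (chiSupport K).indicator h z
      - ε * (chiSupport K).indicator g z‖ ≤ C * ‖ε‖ ^ 2 := by
  by_cases hz : z ∈ chiSupport K
  · rw [Set.indicator_of_mem hz, Set.indicator_of_mem hz,
      Set.indicator_of_mem ((add_mem_chiSupport_iff (hε.trans_lt hr)).2 hz)]
    exact hhg z ε hz hε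
  · rw [Set.indicator_of_notMem hz, Set.indicator_of_notMem hz,
      Set.indicator_of_notMem (mt (add_mem_chiSupport_iff (hε.trans_lt hr)).1 hz)]
    rw [sub_self, mul_zero, sub_zero, norm_zero]
    positivity

end Cutoff

section Volkenborn

variable {p : ℕ} [Fact p.Prime] {K : Type*} [NormedField K] [IsUltrametricDist K]

theorem norm_sum_range_pow_succ_sub_le (hnorm : ∀ n : ℕ, ‖(n : K)‖ = ‖(n : ℚ_[p])‖)
    {g : K → K} {M : ℝ} (hM : 0 ≤ M)
    (hg : ∀ z ε : K, ‖ε‖ ≤ (p : ℝ)⁻¹ → ‖g (z + ε) - g z‖ ≤ M * ‖ε‖) (x : K) {n : ℕ} (hn : 1 ≤ n) :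
    ‖∑ j ∈ range (p ^ (n + 1)), g (x + j) - p * ∑ j ∈ range (p ^ n), g (x + j)‖
      ≤ M * ((p : ℝ) ^ n)⁻¹ := by
  have hconst : (p : K) * ∑ j ∈ range (p ^ n), g (x + j)
      = ∑ _a ∈ range p, ∑ j ∈ range (p ^ n), g (x + j) := by
    rw [sum_const, card_range, nsmul_eq_mul]
  rw [hconst, pow_succ', sum_range_mul_eq_sum_sum, ← sum_sub_distrib]
  refine IsUltrametricDist.norm_sum_le_of_forall_le_of_nonneg (by positivity) fun a _ => ?_
  rw [← sum_sub_distrib]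
  refine IsUltrametricDist.norm_sum_le_of_forall_le_of_nonneg (by positivity) fun j _ => ?_
  have hshift := norm_prime_pow_mul_natCast_le_of_padic hnorm n a
  have hpoint : x + ((p ^ n * a + j : ℕ) : K) = (x + j) + (p : K) ^ n * a := by push_cast; ring
  rw [hpoint]
  exact (hg _ _ (hshift.trans (inv_prime_pow_le_inv_prime Fact.out hn))).trans
    (mul_le_mul_of_nonneg_left hshift hM)

theorem exists_norm_sum_range_pow_le (hnorm : ∀ n : ℕ, ‖(n : K)‖ = ‖(n : ℚ_[p])‖)
    {g : K → K} {M : ℝ} (hM : 0 ≤ M)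
    (hg : ∀ z ε : K, ‖ε‖ ≤ (p : ℝ)⁻¹ → ‖g (z + ε) - g z‖ ≤ M * ‖ε‖) (x : K) :
    ∃ C, ∀ n, 1 ≤ n → ‖∑ j ∈ range (p ^ n), g (x + j)‖ ≤ C * ((p : ℝ) ^ n)⁻¹ := by
  have hp : (0 : ℝ) < p := by exact_mod_cast (Fact.out : p.Prime).pos
  refine ⟨max (p * ‖∑ j ∈ range p, g (x + j)‖) (p * M), fun n hn => ?_⟩
  induction n, hn using Nat.le_induction with
  | base =>
    simp only [pow_one]
    rw [le_mul_inv_iff₀ hp, mul_comm]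
    exact le_max_left _ _
  | succ n hn ih =>
    calc ‖∑ j ∈ range (p ^ (n + 1)), g (x + j)‖
        = ‖(∑ j ∈ range (p ^ (n + 1)), g (x + j) - p * ∑ j ∈ range (p ^ n), g (x + j))
            + p * ∑ j ∈ range (p ^ n), g (x + j)‖ := by rw [sub_add_cancel]
      _ ≤ max (M * ((p : ℝ) ^ n)⁻¹)
            ((p : ℝ)⁻¹ * (max (p * ‖∑ j ∈ range p, g (x + j)‖) (p * M) * ((p : ℝ) ^ n)⁻¹)) := by
        refine (IsUltrametricDist.norm_add_le_max _ _).trans (max_le_max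
          (norm_sum_range_pow_succ_sub_le hnorm hM hg x hn) ?_)
        rw [norm_mul, ← pow_one (p : K), norm_prime_pow_of_padic hnorm, pow_one]
        exact mul_le_mul_of_nonneg_left ih (by positivity)
      _ ≤ max (p * ‖∑ j ∈ range p, g (x + j)‖) (p * M) * ((p : ℝ) ^ (n + 1))⁻¹ := by
        rw [pow_succ, mul_inv]
        refine max_le ?_ (le_of_eq (by ring))
        calc M * ((p : ℝ) ^ n)⁻¹ = p * M * (((p : ℝ) ^ n)⁻¹ * (p : ℝ)⁻¹) := by field_simp
          _ ≤ _ := by gcongr; exact le_max_right _ _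

theorem tendsto_average_shift_sub (hnorm : ∀ n : ℕ, ‖(n : K)‖ = ‖(n : ℚ_[p])‖)
    {h g : K → K} {M C : ℝ} (hM : 0 ≤ M) (hC : 0 ≤ C)
    (hg : ∀ z ε : K, ‖ε‖ ≤ (p : ℝ)⁻¹ → ‖g (z + ε) - g z‖ ≤ M * ‖ε‖)
    (hhg : ∀ z ε : K, ‖ε‖ ≤ (p : ℝ)⁻¹ → ‖h (z + ε) - h z - ε * g z‖ ≤ C * ‖ε‖ ^ 2)
    (x : K) (c : ℕ) :
    Tendsto (fun n : ℕ => ((p : K) ^ n)⁻¹ *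
      ∑ j ∈ range (p ^ n), (h (x + ((p ^ n * c + j : ℕ) : K)) - h (x + j))) atTop (𝓝 0) := by
  have hp : (1 : ℝ) < p := by exact_mod_cast (Fact.out : p.Prime).one_lt
  obtain ⟨B, hB⟩ := exists_norm_sum_range_pow_le hnorm hM hg x
  set D := max C B
  refine squeeze_zero_norm' (a := fun n => D * ((p : ℝ) ^ n)⁻¹) ?_ ?_
  · filter_upwards [eventually_ge_atTop 1] with n hn
    set t : ℝ := ((p : ℝ) ^ n)⁻¹
    set ε : K := (p : K) ^ n * c
    have hε : ‖ε‖ ≤ t := norm_prime_pow_mul_natCast_le_of_padic hnorm n c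
    have hexpand : ∑ j ∈ range (p ^ n), (h (x + ((p ^ n * c + j : ℕ) : K)) - h (x + j))
        = ∑ j ∈ range (p ^ n), (h ((x + j) + ε) - h (x + j) - ε * g (x + j))
          + ε * ∑ j ∈ range (p ^ n), g (x + j) := by
      rw [mul_sum, ← sum_add_distrib]
      refine sum_congr rfl fun j _ => ?_
      have hpoint : x + ((p ^ n * c + j : ℕ) : K) = (x + j) + ε := by push_cast [ε]; ring
      rw [hpoint]
      ring
    have hsum : ‖∑ j ∈ range (p ^ n), (h (x + ((p ^ n * c + j : ℕ) : K)) - h (x + j))‖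
        ≤ D * t ^ 2 := by
      rw [hexpand]
      refine (IsUltrametricDist.norm_add_le_max _ _).trans (max_le ?_ ?_)
      · refine IsUltrametricDist.norm_sum_le_of_forall_le_of_nonneg (by positivity)
          fun j _ => ?_
        calc _ ≤ C * ‖ε‖ ^ 2 :=
              hhg _ _ (hε.trans (inv_prime_pow_le_inv_prime Fact.out hn))
          _ ≤ D * t ^ 2 := by gcongr; exact le_max_left _ _
      · calc ‖ε * ∑ j ∈ range (p ^ n), g (x + j)‖ ≤ t * (B * t) := by
              rw [norm_mul]
              exact mul_le_mul hε (hB n hn) (norm_nonneg _) (by positivity)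
          _ ≤ D * t ^ 2 := by nlinarith [le_max_right C B, sq_nonneg t]
    calc _ = (p : ℝ) ^ n * ‖∑ j ∈ range (p ^ n),
          (h (x + ((p ^ n * c + j : ℕ) : K)) - h (x + j))‖ := by
          rw [norm_mul, norm_inv, norm_prime_pow_of_padic hnorm, inv_inv]
      _ ≤ (p : ℝ) ^ n * (D * t ^ 2) := by gcongr
      _ = D * t * ((p : ℝ) ^ n * t) := by ring
      _ = D * t := by rw [show (p : ℝ) ^ n * t = 1 from mul_inv_cancel₀ (by positivity), mul_one]
  · simpa using (tendsto_inv_atTop_zero.comp (tendsto_pow_atTop_atTop_of_one_lt hp)).const_mul D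

theorem tendsto_average_range_mul (hnorm : ∀ n : ℕ, ‖(n : K)‖ = ‖(n : ℚ_[p])‖)
    {h g : K → K} {M C : ℝ} (hM : 0 ≤ M) (hC : 0 ≤ C)
    (hg : ∀ z ε : K, ‖ε‖ ≤ (p : ℝ)⁻¹ → ‖g (z + ε) - g z‖ ≤ M * ‖ε‖)
    (hhg : ∀ z ε : K, ‖ε‖ ≤ (p : ℝ)⁻¹ → ‖h (z + ε) - h z - ε * g z‖ ≤ C * ‖ε‖ ^ 2)
    {x L : K} (hL : Tendsto (fun n : ℕ => ((p : K) ^ n)⁻¹ * ∑ j ∈ range (p ^ n), h (x + j))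
      atTop (𝓝 L)) (m : ℕ) :
    Tendsto (fun n : ℕ => ((p : K) ^ n)⁻¹ * ∑ k ∈ range (m * p ^ n), h (x + k))
      atTop (𝓝 (m * L)) := by
  have hblocks := tendsto_finsetSum (range m) fun c _ =>
    hL.add (tendsto_average_shift_sub hnorm hM hC hg hhg x c)
  simp only [add_zero, sum_const, card_range, nsmul_eq_mul] at hblocks
  refine hblocks.congr fun n => ?_
  rw [sum_range_mul_eq_sum_sum (fun k => h (x + k)), mul_sum (range m)]
  refine sum_congr rfl fun c _ => ?_
  rw [← mul_add, ← sum_add_distrib]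
  simp only [add_sub_cancel]

end Volkenborn

section Distribution

variable {K : Type*} [NormedField K] {logp : K → K}

theorem indicator_mul_log_sub_one_div
    (hlog_mul : ∀ x y : K, x ≠ 0 → y ≠ 0 → logp (x * y) = logp x + logp y)
    {c : K} (hc : ‖c‖ = 1) (u : K) :
    (chiSupport K).indicator (fun z => z * (logp z - 1)) (u / c)
      = c⁻¹ * ((chiSupport K).indicator (fun z => z * (logp z - 1)) u
        - logp c * (chiSupport K).indicator id u) := by
  have hc0 : c ≠ 0 := norm_ne_zero_iff.mp (by rw [hc]; exact one_ne_zero)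
  have hmem : u / c ∈ chiSupport K ↔ u ∈ chiSupport K := by
    show 1 ≤ ‖u / c‖ ↔ 1 ≤ ‖u‖
    rw [norm_div, hc, div_one]
  by_cases hu : u ∈ chiSupport K
  · have hu0 : u ≠ 0 := norm_pos_iff.mp (one_pos.trans_le hu)
    have hlog : logp u = logp (u / c) + logp c := by
      rw [← hlog_mul _ _ (div_ne_zero hu0 hc0) hc0, div_mul_cancel₀ u hc0]
    rw [Set.indicator_of_mem (hmem.2 hu), Set.indicator_of_mem hu, Set.indicator_of_mem hu, hlog,
      id]
    field_simp
    ring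
  · rw [Set.indicator_of_notMem (mt hmem.1 hu), Set.indicator_of_notMem hu,
      Set.indicator_of_notMem hu, mul_zero, sub_zero, mul_zero]

theorem sum_sum_indicator_mul_log_div_add
    (hlog_mul : ∀ x y : K, x ≠ 0 → y ≠ 0 → logp (x * y) = logp x + logp y)
    {m : ℕ} (hm : ‖(m : K)‖ = 1) (y : K) (N : ℕ) :
    ∑ i ∈ range m, ∑ j ∈ range N,
        (chiSupport K).indicator (fun z => z * (logp z - 1)) ((y + i) / m + j)
      = (m : K)⁻¹ *
        (∑ k ∈ range (m * N), (chiSupport K).indicator (fun z => z * (logp z - 1)) (y + k)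
          - logp m * ∑ k ∈ range (m * N), (chiSupport K).indicator id (y + k)) := by
  have hm0 : (m : K) ≠ 0 := norm_ne_zero_iff.mp (by rw [hm]; exact one_ne_zero)
  have hpoint : ∀ i j : ℕ, (y + i) / m + j = (y + ((i + m * j : ℕ) : K)) / m := by
    intro i j
    field_simp
    push_cast
    ring
  simp only [hpoint, indicator_mul_log_sub_one_div hlog_mul hm, ← mul_sum,
    sum_range_mul_eq_sum_sum_add_mul (fun k => (chiSupport K).indicator _ (y + k))]
  simp only [sum_sub_distrib, mul_sum]

end Distribution

theorem kashio_log_gamma_prime_to_m_distribution_general (p : ℕ) [Fact p.Prime] (K : Type*)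
    [NontriviallyNormedField K] [IsUltrametricDist K]
    [Algebra ℚ_[p] K] (hiso : ∀ q : ℚ_[p], ‖algebraMap ℚ_[p] K q‖ = ‖q‖)
    (logp : K → K)
    (hlog_mul : ∀ x y : K, x ≠ 0 → y ≠ 0 → logp (x * y) = logp x + logp y)
    (hlog_series : ∀ x : K, ‖x - 1‖ < 1 →
      HasSum (fun n : ℕ => (-1) ^ n * (x - 1) ^ (n + 1) / (n + 1 : K)) (logp x))
    (LG : K → K)
    (hLG : ∀ x : K,
      Tendsto (fun n : ℕ => ((p : K) ^ n)⁻¹ * ∑ j ∈ Finset.range (p ^ n),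
          (if 1 ≤ ‖x + (j : K)‖ then (x + (j : K)) * (logp (x + (j : K)) - 1) else 0))
        atTop (nhds (LG x)))
    (R : K → K)
    (hR : ∀ x : K,
      Tendsto (fun n : ℕ => ((p : K) ^ n)⁻¹ * ∑ j ∈ Finset.range (p ^ n),
          (if 1 ≤ ‖x + (j : K)‖ then x + (j : K) else 0))
        atTop (nhds (R x)))
    (m : ℕ) (hm : ¬ p ∣ m) (y : K) :
    ∑ i ∈ Finset.range m, LG ((y + (i : K)) / (m : K)) = LG y - logp (m : K) * R y := by
  have hnorm : ∀ n : ℕ, ‖(n : K)‖ = ‖(n : ℚ_[p])‖ := fun n => by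
    rw [← map_natCast (algebraMap ℚ_[p] K), hiso]
  have hmK := norm_natCast_eq_one_of_padic hnorm hm
  have hm0 : (m : K) ≠ 0 := norm_ne_zero_iff.mp (by rw [hmK]; exact one_ne_zero)
  have hp := (Fact.out : p.Prime).inv_cast_lt_one
  have hlog : ∀ u : K, ‖u‖ ≤ (p : ℝ)⁻¹ → ‖logp (1 + u) - u‖ ≤ p * ‖u‖ ^ 2 := fun _ =>
    norm_log_one_add_sub_self_le hnorm hlog_series
  have hLG' : ∀ x : K, Tendsto (fun n : ℕ => ((p : K) ^ n)⁻¹ * ∑ j ∈ range (p ^ n),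
      (chiSupport K).indicator (fun z => z * (logp z - 1)) (x + j)) atTop (𝓝 (LG x)) := fun x => by
    simpa only [indicator_chiSupport_apply] using hLG x
  have hF := tendsto_average_range_mul hnorm zero_le_one (Nat.cast_nonneg p)
    (fun _ _ => norm_indicator_add_sub_le zero_le_one hp fun _ _ hz hε =>
      (norm_log_add_sub_log_le hlog hlog_mul hz hε).trans_eq (one_mul _).symm)
    (fun _ _ => norm_indicator_expansion_le (Nat.cast_nonneg p) hp fun _ _ hz hε =>
      norm_mul_log_sub_expansion_le hlog hlog_mul hz hε) (hLG' y) m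
  have hRm := tendsto_average_range_mul hnorm le_rfl le_rfl
    (h := (chiSupport K).indicator id) (g := (chiSupport K).indicator 1)
    (fun _ _ => norm_indicator_add_sub_le le_rfl hp fun _ _ _ _ => by simp)
    (fun _ _ => norm_indicator_expansion_le le_rfl hp fun _ _ _ _ => by simp)
    (by simpa only [indicator_chiSupport_apply, id_eq] using hR y) m
  have hLHS := tendsto_finsetSum (range m) fun i _ => hLG' ((y + i) / m)
  refine (tendsto_nhds_unique hLHS (((hF.sub (hRm.const_mul (logp m))).const_mul (m : K)⁻¹).congr
    fun n => ?_)).trans ?_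
  · rw [← mul_sum, sum_sum_indicator_mul_log_div_add hlog_mul hmK]
    ring
  · field_simp

/-- For `p ∤ m` and `y ∈ ℂ_p`,
`∑_{i=0}^{m-1} LΓ_p((y+i)/m) = LΓ_p(y) - log_p(m) ρ_p(y)`, where
`LΓ_p(x) = ∫_{ℤ_p} (x+t)(log_p(x+t)-1) χ(x+t) dt` and `ρ_p(y) = ∫_{ℤ_p} (y+t) χ(y+t) dt`. -/
theorem kashio_log_gamma_prime_to_m_distribution (p : ℕ) [Fact p.Prime] (K : Type*)
    [NontriviallyNormedField K] [CompleteSpace K] [IsAlgClosed K] [IsUltrametricDist K]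
    [Algebra ℚ_[p] K] (hiso : ∀ q : ℚ_[p], ‖algebraMap ℚ_[p] K q‖ = ‖q‖)
    (logp : K → K)
    (hlog_an : ∀ x : K, x ≠ 0 → AnalyticAt K logp x)
    (hlog_mul : ∀ x y : K, x ≠ 0 → y ≠ 0 → logp (x * y) = logp x + logp y)
    (hlog_p : logp (p : K) = 0)
    (hlog_series : ∀ x : K, ‖x - 1‖ < 1 →
      HasSum (fun n : ℕ => (-1) ^ n * (x - 1) ^ (n + 1) / (n + 1 : K)) (logp x))
    (LG : K → K)
    (hLG : ∀ x : K,
      Tendsto (fun n : ℕ => ((p : K) ^ n)⁻¹ * ∑ j ∈ Finset.range (p ^ n),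
          (if 1 ≤ ‖x + (j : K)‖ then (x + (j : K)) * (logp (x + (j : K)) - 1) else 0))
        atTop (nhds (LG x)))
    (R : K → K)
    (hR : ∀ x : K,
      Tendsto (fun n : ℕ => ((p : K) ^ n)⁻¹ * ∑ j ∈ Finset.range (p ^ n),
          (if 1 ≤ ‖x + (j : K)‖ then x + (j : K) else 0))
        atTop (nhds (R x)))
    (m : ℕ) (hm0 : 0 < m) (hm : ¬ p ∣ m) (y : K) :
    ∑ i ∈ Finset.range m, LG ((y + (i : K)) / (m : K)) = LG y - logp (m : K) * R y :=
  kashio_log_gamma_prime_to_m_distribution_general p K hiso logp hlog_mul hlog_series LG hLG R hR m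
    hm y
end
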